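/- arXiv:1310.8325 — 4 statements merged into one kernel-verified Lean document; each statement's English description precedes it below -/
import Mathlib

section
/- Let K be a field, n ≥ 1, and i ∈ {1,…,n}. Let N be the subgroup of H_i consisting of those automorphisms that fix each of the variables X_1,…,X_i, and let A be the subgroup of H_i consisting of those automorphisms that send each of X_1,…,X_i to a polynomial of degree ≤ 1 in X_1,…,X_i and fix each of X_{i+1},…,X_n (so A is isomorphic to Af_i(K)). Then H_i is the internal semidirect product of N by A: N is normal in H_i, N ∩ A is trivial, and every element of H_i is uniquely a product of an element of A and an element of N. Moreover N is canonically isomorphic to the group GA_{n−i}(K[X_1,…,X_i]) of K[X_1,…,X_i]-algebra automorphisms of K[X_1,…,X_n]. -/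
open MvPolynomial

noncomputable section

theorem aeval_update_of_not_mem_vars {K : Type*} [Field K] {n : ℕ} {i : Fin n}
    {p : MvPolynomial (Fin n) K} (h : i ∉ p.vars) (q : MvPolynomial (Fin n) K) :
    aeval (Function.update X i q) p = p := by
  have : aeval (Function.update X i q) p = aeval X p := by
    simp only [aeval_eq_eval₂Hom]
    refine eval₂Hom_congr' rfl (fun j hj _ => ?_) rfl
    have hji : j ≠ i := fun hji => h (hji ▸ hj)
    simp [Function.update_of_ne hji]
  rw [this, aeval_X_left_apply]

open Classical in
/-- The elementary-type automorphism `σ_{i,α,f}` of `K[X_1,…,X_n]`. -/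
def sigmaAut {K : Type*} [Field K] {n : ℕ} (i : Fin n) (α : K) (f : MvPolynomial (Fin n) K) :
    MvPolynomial (Fin n) K ≃ₐ[K] MvPolynomial (Fin n) K :=
  if h : α ≠ 0 ∧ i ∉ f.vars then
    AlgEquiv.ofAlgHom (aeval (Function.update X i (C α * X i + f)))
      (aeval (Function.update X i (C α⁻¹ * X i - C α⁻¹ * f)))
      (by
        rw [comp_aeval]
        have hX : (fun j => (aeval (Function.update X i (C α * X i + f)))
            (Function.update X i (C α⁻¹ * X i - C α⁻¹ * f) j)) = X := by
          funext j
          by_cases hj : j = i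
          · subst hj
            have hf' : aeval (Function.update X j (C α * X j + f)) f = f :=
              aeval_update_of_not_mem_vars h.2 _
            simp only [Function.update_self, map_sub, map_mul, aeval_X, Function.update_self,
              aeval_C, hf', algebraMap_eq]
            rw [mul_add, ← mul_assoc, ← C_mul, inv_mul_cancel₀ h.1, C_1, one_mul]
            ring
          · simp [Function.update_of_ne hj]
        rw [hX, aeval_X_left]
      )
      (by
        rw [comp_aeval]
        have hX : (fun j => (aeval (Function.update X i (C α⁻¹ * X i - C α⁻¹ * f)))
            (Function.update X i (C α * X i + f) j)) = X := by
          funext j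
          by_cases hj : j = i
          · subst hj
            have hf' : aeval (Function.update X j (C α⁻¹ * X j - C α⁻¹ * f)) f = f :=
              aeval_update_of_not_mem_vars h.2 _
            simp only [Function.update_self, map_add, map_mul, aeval_X, Function.update_self,
              aeval_C, hf', algebraMap_eq]
            rw [mul_sub, ← mul_assoc, ← mul_assoc, ← C_mul, mul_inv_cancel₀ h.1,
              C_1, one_mul, one_mul]
            ring
          · simp [Function.update_of_ne hj]
        rw [hX, aeval_X_left]
      )
  else AlgEquiv.refl

def IsLinearAut {R : Type*} [CommRing R] {m : ℕ}
    (ψ : MvPolynomial (Fin m) R ≃ₐ[R] MvPolynomial (Fin m) R) : Prop :=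
  ∃ M : Matrix.GeneralLinearGroup (Fin m) R,
    ∀ j, ψ (X j) = ∑ k, C ((M : Matrix (Fin m) (Fin m) R) j k) * X k

def IsElementaryAut {R : Type*} [CommRing R] {m : ℕ}
    (ψ : MvPolynomial (Fin m) R ≃ₐ[R] MvPolynomial (Fin m) R) : Prop :=
  ∃ (j : Fin m) (f : MvPolynomial (Fin m) R), j ∉ f.vars ∧ ψ (X j) = X j + f ∧
    ∀ k, k ≠ j → ψ (X k) = X k

def TameGroup (R : Type*) [CommRing R] (m : ℕ) :
    Subgroup (MvPolynomial (Fin m) R ≃ₐ[R] MvPolynomial (Fin m) R) :=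
  Subgroup.closure {ψ | IsLinearAut ψ ∨ IsElementaryAut ψ}

def Vsp (K : Type*) [Field K] (n i : ℕ) : Submodule K (MvPolynomial (Fin n) K) :=
  Submodule.span K (insert (1 : MvPolynomial (Fin n) K) {p | ∃ j : Fin n, (j : ℕ) < i ∧ p = X j})

def Hsub (K : Type*) [Field K] (n i : ℕ) :
    Subgroup (MvPolynomial (Fin n) K ≃ₐ[K] MvPolynomial (Fin n) K) where
  carrier := {φ | Submodule.map φ.toLinearMap (Vsp K n i) = Vsp K n i}
  one_mem' := by
    ext x
    simp [Submodule.mem_map]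
  mul_mem' := by
    intro a b ha hb
    simp only [Set.mem_setOf_eq] at ha hb ⊢
    have hab : (a * b).toLinearMap = a.toLinearMap.comp b.toLinearMap :=
      LinearMap.ext fun x => rfl
    rw [hab, Submodule.map_comp, hb, ha]
  inv_mem' := by
    intro φ h
    simp only [Set.mem_setOf_eq] at h ⊢
    conv_lhs => rw [← h]
    rw [← Submodule.map_comp]
    have hid : (φ⁻¹.toLinearMap ∘ₗ φ.toLinearMap) = LinearMap.id := by
      apply LinearMap.ext
      intro x
      simp only [LinearMap.comp_apply, AlgEquiv.toLinearMap_apply, LinearMap.id_apply]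
      rw [← AlgEquiv.mul_apply, inv_mul_cancel]
      rfl
    rw [hid, Submodule.map_id]



/-- The subgroup of automorphisms fixing `X_j` for every `j ∈ S`. -/
def FixSub (K : Type*) [Field K] (n : ℕ) (S : Set (Fin n)) :
    Subgroup (MvPolynomial (Fin n) K ≃ₐ[K] MvPolynomial (Fin n) K) where
  carrier := {φ | ∀ j ∈ S, φ (X j) = X j}
  one_mem' := fun j _ => rfl
  mul_mem' := by
    intro a b ha hb j hj
    rw [AlgEquiv.mul_apply, hb j hj, ha j hj]
  inv_mem' := by
    intro a ha j hj
    conv_lhs => rw [← ha j hj]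
    rw [← AlgEquiv.mul_apply, inv_mul_cancel]
    rfl

/-- `N`: the subgroup of `H_i` of automorphisms fixing each of `X_1, …, X_i`. -/
def Nsub (K : Type*) [Field K] (n i : ℕ) :
    Subgroup (MvPolynomial (Fin n) K ≃ₐ[K] MvPolynomial (Fin n) K) :=
  Hsub K n i ⊓ FixSub K n {j | (j : ℕ) < i}

/-- `A`: the subgroup of `H_i` of automorphisms fixing each of `X_{i+1}, …, X_n`
(its elements automatically send `X_1, …, X_i` into `V_i`, i.e. to polynomials of
degree `≤ 1` in `X_1, …, X_i`; this is the content of the first clause of the theorem). -/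
def Asub (K : Type*) [Field K] (n i : ℕ) :
    Subgroup (MvPolynomial (Fin n) K ≃ₐ[K] MvPolynomial (Fin n) K) :=
  Hsub K n i ⊓ FixSub K n {j | i ≤ (j : ℕ)}

/-- The `K[X_1,…,X_i]`-algebra structure on `K[X_1,…,X_n]`. -/
def baseAlgebra (K : Type*) [Field K] {n i : ℕ} (h : i ≤ n) :
    Algebra (MvPolynomial (Fin i) K) (MvPolynomial (Fin n) K) :=
  ((rename (Fin.castLE h)).toRingHom :
    MvPolynomial (Fin i) K →+* MvPolynomial (Fin n) K).toAlgebra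

/-- `GA_{n-i}(K[X_1,…,X_i])`: the group of `K[X_1,…,X_i]`-algebra automorphisms of
`K[X_1,…,X_n]`. -/
abbrev GAover (K : Type*) [Field K] {n i : ℕ} (h : i ≤ n) :=
  @AlgEquiv (MvPolynomial (Fin i) K) (MvPolynomial (Fin n) K) (MvPolynomial (Fin n) K)
    _ _ _ (baseAlgebra K h) (baseAlgebra K h)

/-!
An automorphism `φ ∈ H_i` maps `X_1, …, X_i` into `V_i`, so the substitution `a_φ` that acts as
`φ` on `X_1, …, X_i` and fixes the other variables agrees with `φ` on `V_i`. Hence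
`a_φ ∘ a_{φ⁻¹} = id`, so `a_φ ∈ A`, while `a_φ⁻¹ ∘ φ` fixes `X_1, …, X_i`, i.e. lies in `N`.
Elements of `N` fix `V_i` pointwise, which makes `N` normal in `H_i`, and `N ∩ A` fixes every
variable. Finally, fixing `X_1, …, X_i` is the same as being `K[X_1, …, X_i]`-linear.
-/

theorem Subgroup.existsUnique_mul_eq_of_inf_eq_bot {G : Type*} [Group G] {A N : Subgroup G}
    (hAN : N ⊓ A = ⊥) {a x : G} (ha : a ∈ A) (hx : x ∈ N) :
    ∃! p : G × G, p.1 ∈ A ∧ p.2 ∈ N ∧ p.1 * p.2 = a * x := by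
  refine ⟨(a, x), ⟨ha, hx, rfl⟩, ?_⟩
  rintro ⟨a', x'⟩ ⟨ha', hx', hax⟩
  have hmem : a⁻¹ * a' ∈ N ⊓ A := by
    have hN : a⁻¹ * a' = x * x'⁻¹ := by
      rw [inv_mul_eq_iff_eq_mul, ← mul_assoc, ← hax, mul_inv_cancel_right]
    exact ⟨hN ▸ N.mul_mem hx (N.inv_mem hx'), A.mul_mem (A.inv_mem ha) ha'⟩
  rw [hAN, Subgroup.mem_bot, inv_mul_eq_one] at hmem
  subst hmem
  exact Prod.ext rfl (mul_left_cancel hax)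

section

variable {K : Type*} [Field K] {n i : ℕ}

local notation "Pₙ" => MvPolynomial (Fin n) K
local notation "GAₙ" => Pₙ ≃ₐ[K] Pₙ

theorem X_mem_Vsp {j : Fin n} (hj : (j : ℕ) < i) : (X j : Pₙ) ∈ Vsp K n i :=
  Submodule.subset_span (Set.mem_insert_of_mem _ ⟨j, hj, rfl⟩)

theorem eqOn_Vsp {f g : Pₙ →ₐ[K] Pₙ} (h : ∀ j : Fin n, (j : ℕ) < i → f (X j) = g (X j)) :
    Set.EqOn f g (Vsp K n i) := by
  refine LinearMap.eqOn_span' (f := f.toLinearMap) (g := g.toLinearMap) ?_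
  rintro _ (rfl | ⟨j, hj, rfl⟩)
  · simp
  · exact h j hj

theorem apply_mem_Vsp {φ : GAₙ} (hφ : φ ∈ Hsub K n i) {v : Pₙ} (hv : v ∈ Vsp K n i) :
    φ v ∈ Vsp K n i :=
  hφ ▸ Submodule.mem_map_of_mem (f := φ.toLinearMap) hv

theorem mem_Hsub_of_agree {φ ψ : GAₙ} (hφ : φ ∈ Hsub K n i)
    (h : ∀ j : Fin n, (j : ℕ) < i → ψ (X j) = φ (X j)) : ψ ∈ Hsub K n i := by
  have hmap : Submodule.map ψ.toLinearMap (Vsp K n i) = Submodule.map φ.toLinearMap (Vsp K n i) :=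
    SetLike.coe_injective <| by
      rw [Submodule.map_coe, Submodule.map_coe]
      exact (eqOn_Vsp (f := ψ.toAlgHom) (g := φ.toAlgHom) h).image_eq
  exact hmap.trans hφ

theorem FixSub_le_Hsub : FixSub K n {j | (j : ℕ) < i} ≤ Hsub K n i :=
  fun _ hφ => mem_Hsub_of_agree (Hsub K n i).one_mem hφ

theorem mem_Nsub_iff {φ : GAₙ} : φ ∈ Nsub K n i ↔ ∀ j : Fin n, (j : ℕ) < i → φ (X j) = X j :=
  ⟨fun hφ => hφ.2, fun hφ => ⟨FixSub_le_Hsub hφ, hφ⟩⟩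

theorem apply_eq_self_of_mem_Nsub {φ : GAₙ} (hφ : φ ∈ Nsub K n i) {v : Pₙ} (hv : v ∈ Vsp K n i) :
    φ v = v :=
  eqOn_Vsp (f := φ.toAlgHom) (g := AlgHom.id K Pₙ) hφ.2 hv

theorem conj_mem_Nsub {h φ : GAₙ} (hh : h ∈ Hsub K n i) (hφ : φ ∈ Nsub K n i) :
    h * φ * h⁻¹ ∈ Nsub K n i := by
  refine mem_Nsub_iff.mpr fun j hj => ?_
  change h (φ (h⁻¹ (X j))) = X j
  rw [apply_eq_self_of_mem_Nsub hφ (apply_mem_Vsp (inv_mem hh) (X_mem_Vsp hj))]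
  exact h.apply_symm_apply (X j)

theorem eq_one_of_forall_apply_X {φ : GAₙ} (h : ∀ j, φ (X j) = X j) : φ = 1 :=
  AlgEquiv.coe_toAlgHom_injective (algHom_ext h)

theorem Nsub_inf_Asub : Nsub K n i ⊓ Asub K n i = ⊥ := by
  refine eq_bot_iff.mpr fun φ ⟨⟨_, hN⟩, ⟨_, hA⟩⟩ => eq_one_of_forall_apply_X fun j => ?_
  rcases lt_or_ge (j : ℕ) i with hj | hj
  exacts [hN j hj, hA j hj]

theorem mem_Asub_iff {φ : GAₙ} :
    φ ∈ Asub K n i ↔ φ ∈ Hsub K n i ∧ (∀ j : Fin n, (j : ℕ) < i → φ (X j) ∈ Vsp K n i) ∧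
      ∀ j : Fin n, i ≤ (j : ℕ) → φ (X j) = X j :=
  ⟨fun ⟨hH, hfix⟩ => ⟨hH, fun _ hj => apply_mem_Vsp hH (X_mem_Vsp hj), hfix⟩,
    fun ⟨hH, _, hfix⟩ => ⟨hH, hfix⟩⟩

variable (i) in
def affinePartHom (φ : GAₙ) : Pₙ →ₐ[K] Pₙ :=
  aeval fun j => if (j : ℕ) < i then φ (X j) else X j

theorem affinePartHom_X (φ : GAₙ) (j : Fin n) :
    affinePartHom i φ (X j) = if (j : ℕ) < i then φ (X j) else X j :=
  aeval_X _ _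

theorem affinePartHom_comp_symm {φ : GAₙ} (hφ : φ ∈ Hsub K n i) :
    (affinePartHom i φ).comp (affinePartHom i φ.symm) = AlgHom.id K Pₙ := by
  refine algHom_ext fun j => ?_
  simp only [AlgHom.comp_apply, AlgHom.id_apply, affinePartHom_X]
  split_ifs with hj
  · have hsymm : φ.symm (X j) ∈ Vsp K n i := apply_mem_Vsp (inv_mem hφ) (X_mem_Vsp hj)
    calc affinePartHom i φ (φ.symm (X j)) = φ (φ.symm (X j)) :=
          eqOn_Vsp (g := φ.toAlgHom) (fun k hk => by rw [affinePartHom_X, if_pos hk]; rfl) hsymm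
      _ = X j := φ.apply_symm_apply (X j)
  · rw [affinePartHom_X, if_neg hj]

def affinePart {φ : GAₙ} (hφ : φ ∈ Hsub K n i) : GAₙ :=
  AlgEquiv.ofAlgHom _ _ (affinePartHom_comp_symm hφ)
    (by simpa using affinePartHom_comp_symm (φ := φ.symm) (inv_mem hφ))

theorem affinePart_X {φ : GAₙ} (hφ : φ ∈ Hsub K n i) (j : Fin n) :
    affinePart hφ (X j) = if (j : ℕ) < i then φ (X j) else X j :=
  affinePartHom_X _ j

theorem affinePart_mem_Asub {φ : GAₙ} (hφ : φ ∈ Hsub K n i) : affinePart hφ ∈ Asub K n i :=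
  ⟨mem_Hsub_of_agree hφ fun j hj => by rw [affinePart_X, if_pos hj],
    fun j hj => by rw [affinePart_X, if_neg (not_lt.mpr hj)]⟩

theorem inv_affinePart_mul_mem_Nsub {φ : GAₙ} (hφ : φ ∈ Hsub K n i) :
    (affinePart hφ)⁻¹ * φ ∈ Nsub K n i := by
  refine mem_Nsub_iff.mpr fun j hj => ?_
  change (affinePart hφ).symm (φ (X j)) = X j
  rw [AlgEquiv.symm_apply_eq, affinePart_X, if_pos hj]

theorem existsUnique_Asub_mul_Nsub {φ : GAₙ} (hφ : φ ∈ Hsub K n i) :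
    ∃! p : GAₙ × GAₙ, p.1 ∈ Asub K n i ∧ p.2 ∈ Nsub K n i ∧ p.1 * p.2 = φ := by
  simpa only [mul_inv_cancel_left] using
    Subgroup.existsUnique_mul_eq_of_inf_eq_bot Nsub_inf_Asub (affinePart_mem_Asub hφ)
      (inv_affinePart_mul_mem_Nsub hφ)

theorem baseAlgebra_algebraMap {hin : i ≤ n} (p : MvPolynomial (Fin i) K) :
    @algebraMap _ _ _ _ (baseAlgebra K hin) p = rename (Fin.castLE hin) p :=
  rfl

def GAover.toAlgEquiv {hin : i ≤ n} (ψ : GAover K hin) : GAₙ :=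
  letI := baseAlgebra K hin
  AlgEquiv.ofRingEquiv (f := ψ.toRingEquiv) fun k => by
    simpa [baseAlgebra_algebraMap] using ψ.commutes (C k)

theorem GAover.apply_X {hin : i ≤ n} (ψ : GAover K hin) {j : Fin n} (hj : (j : ℕ) < i) :
    ψ (X j) = X j := by
  let _ := baseAlgebra K hin
  simpa [baseAlgebra_algebraMap] using ψ.commutes (X ⟨j, hj⟩)

theorem apply_rename_castLE_of_mem_Nsub {hin : i ≤ n} {φ : GAₙ} (hφ : φ ∈ Nsub K n i)
    (p : MvPolynomial (Fin i) K) : φ (rename (Fin.castLE hin) p) = rename (Fin.castLE hin) p := by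
  suffices φ.toAlgHom.comp (rename (Fin.castLE hin)) = rename (Fin.castLE hin) from
    AlgHom.congr_fun this p
  exact algHom_ext fun j => by simpa using mem_Nsub_iff.mp hφ (Fin.castLE hin j) j.isLt

def Nsub.toGAover {hin : i ≤ n} (φ : Nsub K n i) : GAover K hin :=
  @AlgEquiv.ofRingEquiv _ _ _ _ _ _ (baseAlgebra K hin) (baseAlgebra K hin) φ.1.toRingEquiv
    (apply_rename_castLE_of_mem_Nsub φ.2)

def GAover.mulEquivNsub (hin : i ≤ n) : GAover K hin ≃* Nsub K n i where
  toFun ψ := ⟨ψ.toAlgEquiv, mem_Nsub_iff.mpr fun _ hj => ψ.apply_X hj⟩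
  invFun φ := Nsub.toGAover φ
  left_inv _ := rfl
  right_inv _ := rfl
  map_mul' _ _ := rfl

end

theorem statement_7_general {K : Type*} [Field K] {n i : ℕ} (hin : i ≤ n) :
    (∀ φ, φ ∈ Asub K n i ↔ φ ∈ Hsub K n i ∧
        (∀ j : Fin n, (j : ℕ) < i → φ (X j) ∈ Vsp K n i) ∧
        (∀ j : Fin n, i ≤ (j : ℕ) → φ (X j) = X j)) ∧
    Nsub K n i ≤ Hsub K n i ∧ Asub K n i ≤ Hsub K n i ∧
    (∀ h ∈ Hsub K n i, ∀ x ∈ Nsub K n i, h * x * h⁻¹ ∈ Nsub K n i) ∧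
    Nsub K n i ⊓ Asub K n i = ⊥ ∧
    (∀ φ ∈ Hsub K n i, ∃! p : (MvPolynomial (Fin n) K ≃ₐ[K] MvPolynomial (Fin n) K) ×
        (MvPolynomial (Fin n) K ≃ₐ[K] MvPolynomial (Fin n) K),
      p.1 ∈ Asub K n i ∧ p.2 ∈ Nsub K n i ∧ p.1 * p.2 = φ) ∧
    ∃ e : GAover K hin ≃* ↥(Nsub K n i),
      ∀ (ψ : GAover K hin) (x : MvPolynomial (Fin n) K),
        (↑(e ψ) : MvPolynomial (Fin n) K ≃ₐ[K] MvPolynomial (Fin n) K) x = ψ x := by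
  refine ⟨fun _ => mem_Asub_iff, inf_le_left, inf_le_left, fun _ hh _ hx => conj_mem_Nsub hh hx,
    Nsub_inf_Asub, fun _ hφ => existsUnique_Asub_mul_Nsub hφ, GAover.mulEquivNsub hin,
    fun _ _ => rfl⟩

/-- `H_i = Af_i(K) ⋉ GA_{n-i}(K[X_1,…,X_i])`. -/
theorem statement_7 {K : Type*} [Field K] {n i : ℕ} (h1 : 1 ≤ i) (hin : i ≤ n) :
    (∀ φ, φ ∈ Asub K n i ↔ φ ∈ Hsub K n i ∧
        (∀ j : Fin n, (j : ℕ) < i → φ (X j) ∈ Vsp K n i) ∧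
        (∀ j : Fin n, i ≤ (j : ℕ) → φ (X j) = X j)) ∧
    Nsub K n i ≤ Hsub K n i ∧ Asub K n i ≤ Hsub K n i ∧
    (∀ h ∈ Hsub K n i, ∀ x ∈ Nsub K n i, h * x * h⁻¹ ∈ Nsub K n i) ∧
    Nsub K n i ⊓ Asub K n i = ⊥ ∧
    (∀ φ ∈ Hsub K n i, ∃! p : (MvPolynomial (Fin n) K ≃ₐ[K] MvPolynomial (Fin n) K) ×
        (MvPolynomial (Fin n) K ≃ₐ[K] MvPolynomial (Fin n) K),
      p.1 ∈ Asub K n i ∧ p.2 ∈ Nsub K n i ∧ p.1 * p.2 = φ) ∧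
    ∃ e : GAover K hin ≃* ↥(Nsub K n i),
      ∀ (ψ : GAover K hin) (x : MvPolynomial (Fin n) K),
        (↑(e ψ) : MvPolynomial (Fin n) K ≃ₐ[K] MvPolynomial (Fin n) K) x = ψ x :=
  statement_7_general hin

end
end

section
/- Let K be a field and n ≥ 2. Then H_{n−1} ⊆ TA_n(K), i.e., every K-algebra automorphism of K[X_1,…,X_n] that stabilizes the subspace V_{n−1} = K ⊕ KX_1 ⊕ ⋯ ⊕ KX_{n−1} is a tame automorphism. Hence Ĥ_{n−1} = H_{n−1}. -/
open MvPolynomial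

noncomputable section

/-!
An automorphism `φ ∈ H_{n-1}` sends `X_1, …, X_{n-1}` to affine forms in these variables, and
their linear parts are independent because `φ` is injective. Dividing `φ` by the corresponding
affine, hence tame, automorphism leaves an automorphism `ψ` fixing `X_1, …, X_{n-1}`. Over
`R = K[X_1, …, X_{n-1}]` it is an `R`-automorphism of `R[X_n]`, so `ψ(X_n) = a X_n + f` with `a` a
unit of `R`, i.e. `a ∈ Kˣ`; thus `ψ` is a diagonal linear automorphism composed with an
elementary one.
-/

theorem Polynomial.exists_algEquiv_apply_X_eq {R : Type*} [CommRing R] [IsDomain R]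
    (Φ : Polynomial R ≃ₐ[R] Polynomial R) :
    ∃ a b : R, IsUnit a ∧ Φ Polynomial.X = Polynomial.C a * Polynomial.X + Polynomial.C b := by
  open Polynomial in
  set p := Φ X
  set q := Φ.symm X
  have hqp : q.comp p = X :=
    calc q.comp p = Φ (aeval X q) := aeval_algHom_apply (Φ : R[X] →ₐ[R] R[X]) X q
      _ = X := by rw [aeval_X_left_apply, Φ.apply_symm_apply]
  have hdeg : q.natDegree * p.natDegree = 1 := by
    rw [← natDegree_comp, hqp, natDegree_X]
  have hp : p.natDegree = 1 := Nat.eq_one_of_mul_eq_one_left hdeg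
  have hlc : q.leadingCoeff * p.leadingCoeff ^ q.natDegree = 1 := by
    rw [← leadingCoeff_comp (by omega), hqp, leadingCoeff_X]
  refine ⟨p.coeff 1, p.coeff 0, ?_, eq_X_add_C_of_natDegree_le_one hp.le⟩
  rw [Nat.eq_one_of_mul_eq_one_right hdeg, pow_one] at hlc
  rw [← hp]
  exact IsUnit.of_mul_eq_one_right _ hlc

namespace MvPolynomial

section CommRing

variable {R σ : Type*} [CommRing R]

theorem algHom_apply_eq_self_of_forall_mem_vars (φ : MvPolynomial σ R →ₐ[R] MvPolynomial σ R)
    {p : MvPolynomial σ R} (h : ∀ k ∈ p.vars, φ (X k) = X k) : φ p = p :=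
  hom_congr_vars (f₂ := RingHom.id _) (by ext; simp) (fun k hk _ => h k hk) rfl

theorem algEquiv_apply_C (φ : MvPolynomial σ R ≃ₐ[R] MvPolynomial σ R) (r : R) :
    φ (C r) = C r :=
  φ.commutes r

theorem notMem_vars_rename_val (i : σ) (q : MvPolynomial {k // k ≠ i} R) :
    i ∉ (rename Subtype.val q).vars := fun hi => by
  obtain ⟨k, -, hk⟩ := mem_vars_rename _ _ hi
  exact k.2 hk

section Fintype

variable [Fintype σ]

theorem aeval_sum_C_mul_X (M N : Matrix σ σ R) (j : σ) :
    aeval (fun k => ∑ l, C (M k l) * X l) (∑ k, C (N j k) * X k) =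
      ∑ l, C ((N * M) j l) * X l := by
  simp only [map_sum, map_mul, aeval_C, aeval_X, algebraMap_eq, Matrix.mul_apply,
    Finset.mul_sum, Finset.sum_mul, mul_assoc]
  exact Finset.sum_comm

theorem sum_C_mul_C_add_sum_C_mul_X (v c : σ → R) (M : Matrix σ σ R) :
    ∑ j, C (v j) * (C (c j) + ∑ k, C (M j k) * X k) =
      C (v ⬝ᵥ c) + ∑ k, C (Matrix.vecMul v M k) * (X k : MvPolynomial σ R) := by
  simp only [mul_add, Finset.sum_add_distrib, dotProduct, Matrix.vecMul, map_sum, C_mul,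
    Finset.mul_sum, Finset.sum_mul, mul_assoc]
  rw [Finset.sum_comm]

variable [DecidableEq σ]

theorem sum_C_one_mul_X (j : σ) : ∑ k, C ((1 : Matrix σ σ R) j k) * X k = X j := by
  simp [Matrix.one_apply]

theorem coeff_single_sum_C_mul_X (v : σ → R) (j : σ) :
    coeff (Finsupp.single j 1) (∑ k, C (v k) * X k : MvPolynomial σ R) = v j := by
  simp [coeff_sum, coeff_C_mul, coeff_X, Finsupp.single_left_inj]

def linearAut (M : Matrix.GeneralLinearGroup σ R) : MvPolynomial σ R ≃ₐ[R] MvPolynomial σ R :=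
  AlgEquiv.ofAlgHom (aeval fun j => ∑ k, C ((M : Matrix σ σ R) j k) * X k)
    (aeval fun j => ∑ k, C ((M⁻¹ : Matrix.GeneralLinearGroup σ R) j k) * X k)
    (algHom_ext fun j => by
      rw [AlgHom.comp_apply, aeval_X, aeval_sum_C_mul_X, Units.inv_mul, sum_C_one_mul_X]; rfl)
    (algHom_ext fun j => by
      rw [AlgHom.comp_apply, aeval_X, aeval_sum_C_mul_X, Units.mul_inv, sum_C_one_mul_X]; rfl)

theorem linearAut_X (M : Matrix.GeneralLinearGroup σ R) (j : σ) :
    linearAut M (X j) = ∑ k, C ((M : Matrix σ σ R) j k) * X k :=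
  aeval_X _ _

end Fintype

variable [DecidableEq σ]

def optionSubtypeNeEquiv (i : σ) :
    MvPolynomial σ R ≃ₐ[R] Polynomial (MvPolynomial {k // k ≠ i} R) :=
  (renameEquiv R (Equiv.optionSubtypeNe i).symm).trans (optionEquivLeft R _)

theorem optionSubtypeNeEquiv_X_self (i : σ) :
    optionSubtypeNeEquiv (R := R) i (X i) = Polynomial.X := by
  simp [optionSubtypeNeEquiv]

theorem optionSubtypeNeEquiv_rename_val (i : σ) (q : MvPolynomial {k // k ≠ i} R) :
    optionSubtypeNeEquiv i (rename Subtype.val q) = Polynomial.C q := by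
  have : (optionSubtypeNeEquiv (R := R) i).toAlgHom.comp (rename Subtype.val) =
      Polynomial.CAlgHom := by
    refine algHom_ext fun k => ?_
    simp [optionSubtypeNeEquiv, Equiv.optionSubtypeNe_symm_of_ne k.2, optionEquivLeft_X_some]
  exact DFunLike.congr_fun this q

theorem exists_apply_X_eq_of_forall_ne [IsDomain R] (ψ : MvPolynomial σ R ≃ₐ[R] MvPolynomial σ R)
    (i : σ) (h : ∀ k ≠ i, ψ (X k) = X k) :
    ∃ (a : R) (f : MvPolynomial σ R), IsUnit a ∧ i ∉ f.vars ∧ ψ (X i) = C a * X i + f := by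
  set e := optionSubtypeNeEquiv (R := R) i
  have he : e (X i) = Polynomial.X := optionSubtypeNeEquiv_X_self i
  have heC : ∀ q, e (rename Subtype.val q) = Polynomial.C q := optionSubtypeNeEquiv_rename_val i
  have hψ : ∀ q, ψ (rename Subtype.val q) = rename Subtype.val q := fun q =>
    algHom_apply_eq_self_of_forall_mem_vars (ψ : MvPolynomial σ R →ₐ[R] _)
      fun k hk => h k (by rintro rfl; exact notMem_vars_rename_val k q hk)
  let Φ : Polynomial (MvPolynomial {k // k ≠ i} R) ≃ₐ[MvPolynomial {k // k ≠ i} R] _ :=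
    AlgEquiv.ofRingEquiv (f := ((e.symm.trans ψ).trans e).toRingEquiv) fun q => by
      change e (ψ (e.symm (Polynomial.C q))) = Polynomial.C q
      rw [← heC, e.symm_apply_apply, hψ]
  obtain ⟨A, b, hA, hΦ⟩ := Polynomial.exists_algEquiv_apply_X_eq Φ
  obtain ⟨a, ha, rfl⟩ := isUnit_iff_eq_C_of_isReduced.mp hA
  refine ⟨a, rename Subtype.val b, ha, notMem_vars_rename_val i b, ?_⟩
  apply e.injective
  calc e (ψ (X i)) = Φ (e (X i)) := by
        change _ = e (ψ (e.symm (e (X i))))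
        rw [e.symm_apply_apply]
    _ = e (C a * X i + rename Subtype.val b) := by
        rw [he, hΦ, map_add, map_mul, heC, he, ← heC (C a), rename_C]

end CommRing

/-- A vector `v` in the left kernel of `A.updateRow i (Pi.single i 1)` has `v i = 0`, so `φ` sends
the linear form `∑ j, v j • X j` to a constant; injectivity of `φ` then forces `v = 0`. -/
theorem det_updateRow_ne_zero_of_apply_X_eq {K σ : Type*} [Field K] [Fintype σ] [DecidableEq σ]
    (φ : MvPolynomial σ K ≃ₐ[K] MvPolynomial σ K) (i : σ) (c : σ → K) (A : Matrix σ σ K)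
    (hA : ∀ j, A j i = 0) (hφ : ∀ j ≠ i, φ (X j) = C (c j) + ∑ k, C (A j k) * X k) :
    (A.updateRow i (Pi.single i 1)).det ≠ 0 := by
  set M := A.updateRow i (Pi.single i 1)
  intro hdet
  obtain ⟨v, hv, hvM⟩ := Matrix.exists_vecMul_eq_zero_iff.mpr hdet
  have hvi : v i = 0 := by
    simpa [M, Matrix.vecMul, dotProduct, Matrix.updateRow_apply, hA, Pi.single_apply]
      using congrFun hvM i
  have hφv : φ (∑ j, C (v j) * X j) = C (v ⬝ᵥ c) :=
    calc φ (∑ j, C (v j) * X j) = ∑ j, C (v j) * (C (c j) + ∑ k, C (M j k) * X k) := by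
          simp only [map_sum, map_mul, algEquiv_apply_C]
          refine Finset.sum_congr rfl fun j _ => ?_
          rcases eq_or_ne j i with rfl | hj
          · simp [hvi]
          · rw [hφ j hj]
            simp [M, Matrix.updateRow_ne hj]
      _ = C (v ⬝ᵥ c) := by simp [sum_C_mul_C_add_sum_C_mul_X, hvM]
  have hlin : ∑ j, C (v j) * X j = C (v ⬝ᵥ c) := by
    rw [← φ.symm_apply_apply (∑ j, C (v j) * X j), hφv, algEquiv_apply_C]
  apply hv
  ext j
  simpa [coeff_single_sum_C_mul_X, coeff_C, (Finsupp.single_ne_zero.mpr one_ne_zero).symm] using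
    congrArg (coeff (Finsupp.single j 1) : MvPolynomial σ K → K) hlin

end MvPolynomial

section Tame

variable {K : Type*} [Field K] {n : ℕ}

theorem linearAut_mem_tameGroup (M : Matrix.GeneralLinearGroup (Fin n) K) :
    linearAut M ∈ TameGroup K n :=
  Subgroup.subset_closure (Or.inl ⟨M, linearAut_X M⟩)

theorem sigmaAut_X_self {i : Fin n} {α : K} {f : MvPolynomial (Fin n) K} (hα : α ≠ 0)
    (hf : i ∉ f.vars) : sigmaAut i α f (X i) = C α * X i + f := by
  simp [sigmaAut, hα, hf]

theorem sigmaAut_X_of_ne {i k : Fin n} {α : K} {f : MvPolynomial (Fin n) K} (hk : k ≠ i) :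
    sigmaAut i α f (X k) = X k := by
  unfold sigmaAut
  split_ifs <;> simp [hk]

theorem sigmaAut_one_mem_tameGroup {i : Fin n} {f : MvPolynomial (Fin n) K} (hf : i ∉ f.vars) :
    sigmaAut i 1 f ∈ TameGroup K n :=
  Subgroup.subset_closure <| Or.inr
    ⟨i, f, hf, by rw [sigmaAut_X_self one_ne_zero hf, C_1, one_mul], fun _ => sigmaAut_X_of_ne⟩

theorem exists_translation_mem_tameGroup (c : Fin n → K) :
    ∃ τ ∈ TameGroup K n, ∀ j, τ (X j) = X j + C (c j) := by
  rw [← Finset.univ_sum_single c]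
  refine Finset.sum_induction _
    (fun c : Fin n → K => ∃ τ ∈ TameGroup K n, ∀ j, τ (X j) = X j + C (c j)) ?_ ?_ fun j _ => ?_
  · rintro c d ⟨S, hS, hSX⟩ ⟨T, hT, hTX⟩
    refine ⟨S * T, mul_mem hS hT, fun j => ?_⟩
    rw [AlgEquiv.mul_apply, hTX, map_add, hSX, algEquiv_apply_C, Pi.add_apply, C_add, add_assoc]
  · exact ⟨1, one_mem _, fun j => by simp⟩
  · have hj : j ∉ (C (c j) : MvPolynomial (Fin n) K).vars := by simp
    refine ⟨sigmaAut j 1 (C (c j)), sigmaAut_one_mem_tameGroup hj, fun k => ?_⟩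
    rcases eq_or_ne k j with rfl | hk
    · simp [sigmaAut_X_self one_ne_zero hj]
    · simp [sigmaAut_X_of_ne hk, hk]

theorem exists_affine_mem_tameGroup (M : Matrix.GeneralLinearGroup (Fin n) K) (c : Fin n → K) :
    ∃ τ ∈ TameGroup K n,
      ∀ j, τ (X j) = C (c j) + ∑ k, C ((M : Matrix (Fin n) (Fin n) K) j k) * X k := by
  obtain ⟨T, hT, hTX⟩ := exists_translation_mem_tameGroup c
  refine ⟨linearAut M * T, mul_mem (linearAut_mem_tameGroup M) hT, fun j => ?_⟩
  rw [AlgEquiv.mul_apply, hTX, map_add, linearAut_X, algEquiv_apply_C, add_comm]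

theorem mem_tameGroup_of_forall_ne (ψ : MvPolynomial (Fin n) K ≃ₐ[K] MvPolynomial (Fin n) K)
    (i : Fin n) (h : ∀ k ≠ i, ψ (X k) = X k) : ψ ∈ TameGroup K n := by
  obtain ⟨a, f, ha, hf, hi⟩ := exists_apply_X_eq_of_forall_ne ψ i h
  set d := Function.update (1 : Fin n → K) i a
  have hd : (Matrix.diagonal d).det ≠ 0 := by
    simp [d, Matrix.det_diagonal, Finset.prod_update_of_mem, ha.ne_zero]
  set D := linearAut (Matrix.GeneralLinearGroup.mkOfDetNeZero _ hd)
  have hD : ∀ k, D (X k) = C (d k) * X k := fun k => by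
    simp [D, linearAut_X, Matrix.diagonal_apply, apply_ite C, ite_mul]
  have hDi : D (X i) = C a * X i := by simp [hD, d]
  have hDk : ∀ k ≠ i, D (X k) = X k := fun k hk => by simp [hD, d, hk]
  have hDf : D f = f := algHom_apply_eq_self_of_forall_mem_vars D.toAlgHom fun k hk =>
    hDk k (ne_of_mem_of_not_mem hk hf)
  have hE : IsElementaryAut (D⁻¹ * ψ) := by
    refine ⟨i, f, hf, ?_, fun k hk => ?_⟩
    · rw [AlgEquiv.mul_apply, hi, AlgEquiv.aut_inv, D.symm_apply_eq, map_add, hDi, hDf]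
    · rw [AlgEquiv.mul_apply, h k hk, AlgEquiv.aut_inv, D.symm_apply_eq, hDk k hk]
  rw [← mul_inv_cancel_left D ψ]
  exact mul_mem (linearAut_mem_tameGroup _) (Subgroup.subset_closure (Or.inr hE))

end Tame

section Stabilizer

variable {K : Type*} [Field K]

theorem X_mem_vsp {n i : ℕ} {j : Fin n} (hj : (j : ℕ) < i) :
    (X j : MvPolynomial (Fin n) K) ∈ Vsp K n i :=
  Submodule.subset_span (Set.mem_insert_of_mem _ ⟨j, hj, rfl⟩)

theorem apply_mem_vsp_of_mem_hsub {n i : ℕ}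
    {φ : MvPolynomial (Fin n) K ≃ₐ[K] MvPolynomial (Fin n) K}
    (hφ : φ ∈ Hsub K n i) {p : MvPolynomial (Fin n) K} (hp : p ∈ Vsp K n i) :
    φ p ∈ Vsp K n i := by
  rw [← show Submodule.map φ.toLinearMap (Vsp K n i) = Vsp K n i from hφ]
  exact Submodule.mem_map_of_mem hp

theorem exists_eq_of_mem_vsp {n i : ℕ} {p : MvPolynomial (Fin n) K} (hp : p ∈ Vsp K n i) :
    ∃ (c : K) (a : Fin n → K), (∀ k : Fin n, i ≤ k → a k = 0) ∧
      p = C c + ∑ k, C (a k) * X k := by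
  have hs : {p : MvPolynomial (Fin n) K | ∃ j : Fin n, (j : ℕ) < i ∧ p = X j} =
      X '' {j : Fin n | (j : ℕ) < i} := by
    ext
    simp [eq_comm]
  rw [Vsp, hs, Submodule.mem_span_insert] at hp
  obtain ⟨c, z, hz, rfl⟩ := hp
  obtain ⟨l, hl, rfl⟩ := (Finsupp.mem_span_image_iff_linearCombination K).mp hz
  refine ⟨c, l, fun k hk => (Finsupp.mem_supported' _ _).mp hl k (by simpa using hk), ?_⟩
  simp [Finsupp.linearCombination_apply, Finsupp.sum_fintype, smul_eq_C_mul]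

theorem exists_apply_X_eq_affine_of_mem_hsub {m : ℕ}
    {φ : MvPolynomial (Fin (m + 1)) K ≃ₐ[K] MvPolynomial (Fin (m + 1)) K}
    (hφ : φ ∈ Hsub K (m + 1) m) :
    ∃ (c : Fin (m + 1) → K) (A : Matrix (Fin (m + 1)) (Fin (m + 1)) K),
      (∀ j, A j (Fin.last m) = 0) ∧ ∀ j ≠ Fin.last m, φ (X j) = C (c j) + ∑ k, C (A j k) * X k := by
  have key : ∀ j : Fin (m + 1), ∃ (c : K) (a : Fin (m + 1) → K), a (Fin.last m) = 0 ∧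
      (j ≠ Fin.last m → φ (X j) = C c + ∑ k, C (a k) * X k) := fun j => by
    by_cases hj : j = Fin.last m
    · exact ⟨0, 0, rfl, fun h => (h hj).elim⟩
    · obtain ⟨c, a, ha, h⟩ := exists_eq_of_mem_vsp
        (apply_mem_vsp_of_mem_hsub hφ (X_mem_vsp (Fin.val_lt_last hj)))
      exact ⟨c, a, ha _ (Fin.val_last m).ge, fun _ => h⟩
  choose c A hA hφA using key
  exact ⟨c, A, hA, hφA⟩

theorem hsub_le_tameGroup (n : ℕ) : Hsub K n (n - 1) ≤ TameGroup K n := by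
  intro φ hφ
  cases n with
  | zero =>
    rw [show φ = 1 from AlgEquiv.coe_toAlgHom_injective (algHom_ext fun i => i.elim0)]
    exact one_mem _
  | succ m =>
    rw [Nat.add_sub_cancel] at hφ
    obtain ⟨c, A, hA, hφX⟩ := exists_apply_X_eq_affine_of_mem_hsub hφ
    obtain ⟨τ, hτ, hτX⟩ := exists_affine_mem_tameGroup
      (.mkOfDetNeZero _ (det_updateRow_ne_zero_of_apply_X_eq φ _ c A hA hφX)) c
    have hψ : ∀ k ≠ Fin.last m, (τ⁻¹ * φ) (X k) = X k := fun k hk => by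
      rw [AlgEquiv.mul_apply, AlgEquiv.aut_inv, τ.symm_apply_eq, hτX, hφX k hk]
      simp [Matrix.updateRow_ne hk]
    rw [← mul_inv_cancel_left τ φ]
    exact mul_mem hτ (mem_tameGroup_of_forall_ne _ _ hψ)

end Stabilizer

theorem statement_9_general {K : Type*} [Field K] {n : ℕ} :
    Hsub K n (n - 1) ≤ TameGroup K n ∧
    Hsub K n (n - 1) ⊓ TameGroup K n = Hsub K n (n - 1) :=
  ⟨hsub_le_tameGroup n, inf_eq_left.mpr (hsub_le_tameGroup n)⟩

/-- `H_{n-1} ⊆ TA_n(K)`, hence `Ĥ_{n-1} = H_{n-1}`. -/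
theorem statement_9 {K : Type*} [Field K] {n : ℕ} (hn : 2 ≤ n) :
    Hsub K n (n - 1) ≤ TameGroup K n ∧
    Hsub K n (n - 1) ⊓ TameGroup K n = Hsub K n (n - 1) :=
  statement_9_general

end
end

section
/- Let S = [[0,1],[−1,0]] and T = [[1,−1],[1,0]] in SL_2(ℤ). Then S has order 4, T has order 6, S² = T³ (= −I), and the homomorphism from the amalgamated free product (ℤ/4ℤ) *_{ℤ/2ℤ} (ℤ/6ℤ) to SL_2(ℤ) sending the generator of ℤ/4ℤ to S and the generator of ℤ/6ℤ to T (where ℤ/2ℤ embeds as the subgroups generated by S² and by T³ respectively) is an isomorphism: SL_2(ℤ) ≅ (ℤ/4ℤ) *_{ℤ/2ℤ} (ℤ/6ℤ). -/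
/-!
`S⁴ = 1` and `S² = T³`, so `S` and `T` define a homomorphism `Φ` out of the amalgam; it is onto
because `S⁻¹` and `TS = [[1,1],[0,1]]` generate `SL₂(ℤ)`.

For injectivity, let `s, t` be the generators of the amalgam. As `s² = t³` is central with
`(s²)² = 1`, every element is `(s²)ᵏ w` with `w` a word in the letters `s, t, t²` in which `s`
alternates with `t` or `t²`. Ping-pong on `ℤ²` shows that `Φ w ≠ ±1` for a nonempty such word:
`T` and `T²` map `{xy < 0}` into `{xy > 0, x ≠ y}`, and `S` maps the latter back into `{xy < 0}`.
Applied to `(1, 1)` if `w` ends in `s` and to `(1, -1)` otherwise, `Φ w` lands in one of these two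
sets (the first with `±(1, -1)` removed), and neither contains the base vector or its negative.
-/

open MvPolynomial

noncomputable section


/-- `S = [[0,1],[-1,0]] ∈ SL₂(ℤ)`. -/
def Smat : Matrix.SpecialLinearGroup (Fin 2) ℤ :=
  ⟨!![0, 1; -1, 0], by norm_num [Matrix.det_fin_two_of]⟩

/-- `T = [[1,-1],[1,0]] ∈ SL₂(ℤ)`. -/
def Tmat : Matrix.SpecialLinearGroup (Fin 2) ℤ :=
  ⟨!![1, -1; 1, 0], by norm_num [Matrix.det_fin_two_of]⟩

/-- The amalgamated free product `A *_C B` of two groups along injective homomorphisms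
`f : C → A`, `g : C → B`: the pushout of `f` and `g` in the category of groups, realized as
the quotient of the free product `A * B` by the relations identifying `f(c)` and `g(c)`. -/
abbrev Amal {A B C : Type*} [Group A] [Group B] [Group C] (f : C →* A) (g : C →* B) :=
  Monoid.Coprod A B ⧸ Subgroup.normalClosure
    {w | ∃ c : C, w = Monoid.Coprod.inl (f c) * (Monoid.Coprod.inr (g c))⁻¹}

/-- The embedding `ℤ/2ℤ → ℤ/4ℤ` sending the generator to twice the generator. -/
def z2to4 : Multiplicative (ZMod 2) →* Multiplicative (ZMod 4) :=
  AddMonoidHom.toMultiplicative (ZMod.lift 2 ⟨zmultiplesHom (ZMod 4) (2 : ZMod 4), by decide⟩)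

/-- The embedding `ℤ/2ℤ → ℤ/6ℤ` sending the generator to three times the generator. -/
def z2to6 : Multiplicative (ZMod 2) →* Multiplicative (ZMod 6) :=
  AddMonoidHom.toMultiplicative (ZMod.lift 2 ⟨zmultiplesHom (ZMod 6) (3 : ZMod 6), by decide⟩)

open Monoid MatrixGroups

section CyclicHom

variable {G : Type*} [Group G] {n : ℕ}

lemma Multiplicative.ofAdd_one_pow_val [NeZero n] (x : Multiplicative (ZMod n)) :
    ofAdd (1 : ZMod n) ^ x.toAdd.val = x := by
  rw [← ofAdd_nsmul, nsmul_one, ZMod.natCast_zmod_val, ofAdd_toAdd]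

def zmodPowersHom (g : G) (hg : g ^ n = 1) : Multiplicative (ZMod n) →* G :=
  AddMonoidHom.toMultiplicativeLeft <|
    ZMod.lift n ⟨zmultiplesHom (Additive G) (Additive.ofMul g), by simp [← ofMul_pow, hg]⟩

@[simp]
lemma zmodPowersHom_ofAdd_one (g : G) (hg : g ^ n = 1) :
    zmodPowersHom g hg (Multiplicative.ofAdd 1) = g := by
  rw [← Int.cast_one (R := ZMod n)]
  exact congrArg Additive.toMul (ZMod.lift_coe n _ 1) |>.trans (by simp)

end CyclicHom

namespace Amal

variable {A B C : Type*} [Group A] [Group B] [Group C] {f : C →* A} {g : C →* B}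

def inl : A →* Amal f g := (QuotientGroup.mk' _).comp Coprod.inl

def inr : B →* Amal f g := (QuotientGroup.mk' _).comp Coprod.inr

lemma inl_apply_eq_inr_apply (c : C) : (inl (f c) : Amal f g) = inr (g c) :=
  QuotientGroup.eq_iff_div_mem.2 <| Subgroup.subset_normalClosure ⟨c, div_eq_mul_inv _ _⟩

@[elab_as_elim]
lemma induction_on {p : Amal f g → Prop} (x : Amal f g) (inl : ∀ a, p (inl a))
    (inr : ∀ b, p (inr b)) (mul : ∀ x y, p x → p y → p (x * y)) : p x := by
  induction x using QuotientGroup.induction_on with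
  | H w =>
    induction w using Coprod.induction_on with
    | inl a => exact inl a
    | inr b => exact inr b
    | mul v w hv hw => exact mul _ _ hv hw

variable {G : Type*} [Group G]

def lift (φ : A →* G) (ψ : B →* G) (h : ∀ c, φ (f c) = ψ (g c)) : Amal f g →* G :=
  QuotientGroup.lift _ (Coprod.lift φ ψ) <| Subgroup.normalClosure_le_normal <| by
    rintro _ ⟨c, rfl⟩
    simp [h]

@[simp]
lemma lift_inl (φ : A →* G) (ψ : B →* G) (h : ∀ c, φ (f c) = ψ (g c)) (a : A) :
    lift φ ψ h (inl a) = φ a :=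
  Coprod.lift_apply_inl φ ψ a

@[simp]
lemma lift_inr (φ : A →* G) (ψ : B →* G) (h : ∀ c, φ (f c) = ψ (g c)) (b : B) :
    lift φ ψ h (inr b) = ψ b :=
  Coprod.lift_apply_inr φ ψ b

end Amal

lemma z2to4_ofAdd_one : z2to4 (.ofAdd 1) = .ofAdd 1 ^ 2 := by decide

lemma z2to6_ofAdd_one : z2to6 (.ofAdd 1) = .ofAdd 1 ^ 3 := by decide

lemma forall_z2to4_eq_z2to6_iff {G : Type*} [Group G] (φ : Multiplicative (ZMod 4) →* G)
    (ψ : Multiplicative (ZMod 6) →* G) :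
    (∀ c, φ (z2to4 c) = ψ (z2to6 c)) ↔ φ (.ofAdd 1) ^ 2 = ψ (.ofAdd 1) ^ 3 := by
  simp only [← map_pow, ← z2to4_ofAdd_one, ← z2to6_ofAdd_one]
  refine ⟨fun h ↦ h _, fun h c ↦ ?_⟩
  rw [← Multiplicative.ofAdd_one_pow_val c]
  simp only [map_pow, h]

inductive Letter
  | s
  | t
  | tSq

namespace Letter

def isS : Letter → Bool
  | s => true
  | _ => false

variable {G H : Type*} [Group G] [Group H]

def eval (x y : G) : Letter → G
  | s => x
  | t => y
  | tSq => y ^ 2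

lemma map_eval (φ : G →* H) (x y : G) (a : Letter) : φ (a.eval x y) = a.eval (φ x) (φ y) := by
  cases a <;> simp [eval]

lemma commute_eval {x y : G} (hxy : x ^ 2 = y ^ 3) (a : Letter) :
    Commute (x ^ 2) (a.eval x y) := by
  cases a
  · exact (Commute.self_pow x 2).symm
  · exact hxy ▸ (Commute.self_pow y 3).symm
  · exact hxy ▸ (Commute.self_pow y 3).symm.pow_right 2

end Letter

def Alternating (l : List Letter) : Prop :=
  (l.map Letter.isS).IsChain (· ≠ ·)

section NormalForm

variable {G H : Type*} [Group G] [Group H]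

def wordEval (x y : G) (l : List Letter) : G :=
  (l.map (Letter.eval x y)).prod

@[simp]
lemma wordEval_nil (x y : G) : wordEval x y [] = 1 := rfl

@[simp]
lemma wordEval_cons (x y : G) (a : Letter) (l : List Letter) :
    wordEval x y (a :: l) = a.eval x y * wordEval x y l := rfl

lemma map_wordEval (φ : G →* H) (x y : G) (l : List Letter) :
    φ (wordEval x y l) = wordEval (φ x) (φ y) l := by
  induction l with
  | nil => simp
  | cons a l ih => simp [ih, Letter.map_eval]

def HasNormalForm (x y g : G) : Prop :=
  ∃ k : ℕ, ∃ l, Alternating l ∧ g = (x ^ 2) ^ k * wordEval x y l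

variable {x y : G}

lemma HasNormalForm.sq_mul {g : G} (h : HasNormalForm x y g) : HasNormalForm x y (x ^ 2 * g) := by
  obtain ⟨k, l, hl, rfl⟩ := h
  exact ⟨k + 1, l, hl, by rw [pow_succ' (x ^ 2) k, mul_assoc]⟩

lemma hasNormalForm_eval_mul_wordEval (hxy : x ^ 2 = y ^ 3) (a : Letter) {l : List Letter}
    (hl : Alternating l) : HasNormalForm x y (a.eval x y * wordEval x y l) := by
  rcases l with _ | ⟨b, l⟩
  · exact ⟨0, [a], List.isChain_singleton _, by simp⟩
  by_cases hab : a.isS ≠ b.isS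
  · exact ⟨0, a :: b :: l, hl.cons_cons hab, by simp⟩
  have hl' : Alternating l := hl.tail
  simp only [wordEval_cons, ← mul_assoc]
  match a, b, hab with
  | .s, .s, _ => exact ⟨1, l, hl', by simp [Letter.eval, sq]⟩
  | .t, .t, _ => exact ⟨0, .tSq :: l, hl, by simp [Letter.eval, sq]⟩
  | .t, .tSq, _ => exact ⟨1, l, hl', by simp [Letter.eval, hxy, pow_succ']⟩
  | .tSq, .t, _ => exact ⟨1, l, hl', by simp [Letter.eval, hxy, pow_succ]⟩
  | .tSq, .tSq, _ => exact ⟨1, .t :: l, hl, by simp [Letter.eval, hxy]; group⟩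

lemma HasNormalForm.eval_mul (hxy : x ^ 2 = y ^ 3) {g : G} (h : HasNormalForm x y g)
    (a : Letter) : HasNormalForm x y (a.eval x y * g) := by
  obtain ⟨k, l, hl, rfl⟩ := h
  obtain ⟨k', l', hl', he⟩ := hasNormalForm_eval_mul_wordEval hxy a hl
  refine ⟨k + k', l', hl', ?_⟩
  rw [← mul_assoc, ← ((a.commute_eval hxy).pow_left k).eq, mul_assoc, he, ← mul_assoc, ← pow_add]

lemma hasNormalForm_of_mem_closure (hx : x ^ 4 = 1) (hxy : x ^ 2 = y ^ 3) {g : G}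
    (hg : g ∈ Subgroup.closure {x, y}) : HasNormalForm x y g := by
  have hx_inv : x⁻¹ = x ^ 2 * x :=
    inv_eq_of_mul_eq_one_left (by rw [← pow_succ, ← pow_succ, hx])
  have hy_inv : y⁻¹ = x ^ 2 * y ^ 2 :=
    inv_eq_of_mul_eq_one_left (by rw [mul_assoc, ← pow_succ, ← hxy, ← pow_add, hx])
  induction hg using Subgroup.closure_induction_left with
  | one => exact ⟨0, [], List.isChain_nil, by simp⟩
  | mul_left _ hz _ _ ih =>
    rcases hz with rfl | rfl
    exacts [ih.eval_mul hxy .s, ih.eval_mul hxy .t]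
  | inv_mul_cancel _ hz _ _ ih =>
    rcases hz with rfl | rfl
    · rw [hx_inv, mul_assoc]
      exact (ih.eval_mul hxy .s).sq_mul
    · rw [hy_inv, mul_assoc]
      exact (ih.eval_mul hxy .tSq).sq_mul

end NormalForm

lemma Smat_pow_four : Smat ^ 4 = 1 := by decide

lemma Tmat_pow_six : Tmat ^ 6 = 1 := by decide

lemma Smat_sq_eq_Tmat_cube : Smat ^ 2 = Tmat ^ 3 := by decide

lemma Smat_sq : Smat ^ 2 = -1 := by decide

lemma orderOf_Smat : orderOf Smat = 4 :=
  orderOf_eq_prime_pow (p := 2) (n := 1) (by decide) Smat_pow_four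

lemma orderOf_Tmat : orderOf Tmat = 6 :=
  (orderOf_eq_iff (by norm_num)).2 ⟨Tmat_pow_six, by decide⟩

lemma closure_Smat_Tmat : Subgroup.closure {Smat, Tmat} = ⊤ := by
  rw [eq_top_iff, ← SpecialLinearGroup.SL2Z_generators, Subgroup.closure_le]
  have hS : Smat ∈ Subgroup.closure {Smat, Tmat} := Subgroup.subset_closure (.inl rfl)
  have hT : Tmat ∈ Subgroup.closure {Smat, Tmat} := Subgroup.subset_closure (.inr rfl)
  rintro _ (rfl | rfl)
  · rw [show ModularGroup.S = Smat⁻¹ by decide]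
    exact inv_mem hS
  · rw [show ModularGroup.T = Tmat * Smat by decide]
    exact mul_mem hT hS

section PingPong

lemma Smat_smul (v : Fin 2 → ℤ) : Smat • v = ![v 1, -v 0] := by
  rw [Matrix.SpecialLinearGroup.smul_def]
  ext i; fin_cases i <;> simp [Smat, Matrix.mulVec, dotProduct, Fin.sum_univ_two]

lemma Tmat_smul (v : Fin 2 → ℤ) : Tmat • v = ![v 0 - v 1, v 0] := by
  rw [Matrix.SpecialLinearGroup.smul_def]
  ext i; fin_cases i <;> simp [Tmat, Matrix.mulVec, dotProduct, Fin.sum_univ_two]; ring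

lemma Tmat_sq_smul (v : Fin 2 → ℤ) : Tmat ^ 2 • v = ![-v 1, v 0 - v 1] := by
  ext i; fin_cases i <;> simp [sq, mul_smul, Tmat_smul]

def tRegion : Set (Fin 2 → ℤ) := {v | 0 < v 0 * v 1 ∧ v 0 ≠ v 1}

/-- Removing `±b` costs nothing: `S` maps `tRegion` onto `{xy < 0, x ≠ -y}`, which avoids
`±(1, 1)` and `±(1, -1)`. -/
def sRegion (b : Fin 2 → ℤ) : Set (Fin 2 → ℤ) := {v | v 0 * v 1 < 0 ∧ v ≠ b ∧ v ≠ -b}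

lemma Tmat_smul_mem_tRegion {v : Fin 2 → ℤ} (hv : v 0 * v 1 < 0) : Tmat • v ∈ tRegion := by
  have hv1 : v 1 ≠ 0 := by rintro h; simp [h] at hv
  simp only [tRegion, Tmat_smul, Set.mem_ofPred_eq, Matrix.cons_val_zero, Matrix.cons_val_one]
  exact ⟨by nlinarith [sq_nonneg (v 0)], by omega⟩

lemma Tmat_sq_smul_mem_tRegion {v : Fin 2 → ℤ} (hv : v 0 * v 1 < 0) :
    Tmat ^ 2 • v ∈ tRegion := by
  have hv0 : v 0 ≠ 0 := by rintro h; simp [h] at hv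
  simp only [tRegion, Tmat_sq_smul, Set.mem_ofPred_eq, Matrix.cons_val_zero, Matrix.cons_val_one]
  exact ⟨by nlinarith [sq_nonneg (v 1)], by omega⟩

def Letter.base : Letter → Fin 2 → ℤ
  | s => ![1, 1]
  | _ => ![1, -1]

def Letter.region (b : Fin 2 → ℤ) : Letter → Set (Fin 2 → ℤ)
  | s => sRegion b
  | _ => tRegion

lemma Smat_smul_mem_sRegion (d : Letter) {v : Fin 2 → ℤ} (hv : v ∈ tRegion) :
    Smat • v ∈ sRegion d.base := by
  obtain ⟨hpos, hne⟩ := hv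
  have hSv : ∀ w, Smat • v = w → v 0 = -w 1 ∧ v 1 = w 0 := by
    rintro w rfl
    simp [Smat_smul]
  refine ⟨by simp [Smat_smul]; nlinarith, fun h ↦ ?_, fun h ↦ ?_⟩ <;>
    obtain ⟨h0, h1⟩ := hSv _ h <;> cases d <;> simp_all [Letter.base]

lemma Letter.eval_smul_mem_region {a c : Letter} (hac : a.isS ≠ c.isS) (d : Letter)
    {v : Fin 2 → ℤ} (hv : v ∈ c.region d.base) : a.eval Smat Tmat • v ∈ a.region d.base := by
  cases a <;> cases c <;> simp only [isS, ne_eq, not_true_eq_false] at hac <;>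
    simp only [region, eval] at hv ⊢
  · exact Smat_smul_mem_sRegion d hv
  · exact Smat_smul_mem_sRegion d hv
  · exact Tmat_smul_mem_tRegion hv.1
  · exact Tmat_sq_smul_mem_tRegion hv.1

lemma Letter.eval_smul_base_mem_region (a : Letter) :
    a.eval Smat Tmat • a.base ∈ a.region a.base := by
  cases a <;> simp [eval, base, region, sRegion, tRegion, Smat_smul, Tmat_smul, Tmat_sq_smul]

lemma Letter.base_notMem_region (a c : Letter) :
    c.base ∉ a.region c.base ∧ -c.base ∉ a.region c.base := by
  cases a <;> cases c <;> simp [base, region, sRegion, tRegion]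

lemma wordEval_smul_base_mem_region {l : List Letter} (hl : Alternating l) {a c : Letter}
    (ha : l.head? = some a) (hc : l.getLast? = some c) :
    wordEval Smat Tmat l • c.base ∈ a.region c.base := by
  induction l generalizing a with
  | nil => simp at ha
  | cons a' l ih =>
    obtain rfl : a' = a := by simpa using ha
    rcases l with _ | ⟨b, l⟩
    · obtain rfl : a' = c := by simpa using hc
      simpa using a'.eval_smul_base_mem_region
    · have hab : a'.isS ≠ b.isS := (List.isChain_cons_cons.1 hl).1
      rw [wordEval_cons, mul_smul]
      exact Letter.eval_smul_mem_region hab c (ih hl.tail rfl (by simpa using hc))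

lemma eq_nil_and_even_of_neg_one_pow_mul_wordEval_eq_one {k : ℕ} {l : List Letter}
    (hl : Alternating l) (h : (-1 : SL(2, ℤ)) ^ k * wordEval Smat Tmat l = 1) :
    l = [] ∧ Even k := by
  obtain rfl : l = [] := by
    by_contra hne
    have hmem := wordEval_smul_base_mem_region hl (List.head?_eq_some_head hne)
      (List.getLast?_eq_some_getLast hne)
    obtain ⟨hb, hnb⟩ := Letter.base_notMem_region (l.head hne) (l.getLast hne)
    rcases neg_one_pow_eq_or SL(2, ℤ) k with h' | h' <;> rw [h'] at h
    · rw [one_mul] at h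
      exact hb (by simpa [h] using hmem)
    · rw [neg_one_mul, neg_eq_iff_eq_neg] at h
      exact hnb (by simpa [h, Matrix.SpecialLinearGroup.smul_def] using hmem)
  exact ⟨rfl, (neg_one_pow_eq_one_iff_even (R := SL(2, ℤ)) (by decide)).1 (by simpa using h)⟩

end PingPong

abbrev amalS : Amal z2to4 z2to6 := Amal.inl (.ofAdd 1)

abbrev amalT : Amal z2to4 z2to6 := Amal.inr (.ofAdd 1)

lemma amalS_pow_four : amalS ^ 4 = 1 := by
  rw [← map_pow, show (Multiplicative.ofAdd (1 : ZMod 4)) ^ 4 = 1 by decide, map_one]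

lemma amalS_sq_eq_amalT_cube : amalS ^ 2 = amalT ^ 3 :=
  (forall_z2to4_eq_z2to6_iff Amal.inl Amal.inr).1 Amal.inl_apply_eq_inr_apply

lemma closure_amalS_amalT : Subgroup.closure {amalS, amalT} = ⊤ := by
  rw [Subgroup.eq_top_iff']
  intro x
  induction x using Amal.induction_on with
  | inl a =>
    rw [← Multiplicative.ofAdd_one_pow_val a, map_pow]
    exact pow_mem (Subgroup.subset_closure (.inl rfl)) _
  | inr b =>
    rw [← Multiplicative.ofAdd_one_pow_val b, map_pow]
    exact pow_mem (Subgroup.subset_closure (.inr rfl)) _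
  | mul x y hx hy => exact mul_mem hx hy

def amalToSL2 : Amal z2to4 z2to6 →* SL(2, ℤ) :=
  Amal.lift (zmodPowersHom Smat Smat_pow_four) (zmodPowersHom Tmat Tmat_pow_six) <|
    (forall_z2to4_eq_z2to6_iff _ _).2 (by simpa using Smat_sq_eq_Tmat_cube)

@[simp]
lemma amalToSL2_amalS : amalToSL2 amalS = Smat := by simp [amalToSL2]

@[simp]
lemma amalToSL2_amalT : amalToSL2 amalT = Tmat := by simp [amalToSL2]

lemma amalToSL2_injective : Function.Injective amalToSL2 := by
  rw [injective_iff_map_eq_one]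
  intro g hg
  obtain ⟨k, l, hl, rfl⟩ := hasNormalForm_of_mem_closure amalS_pow_four amalS_sq_eq_amalT_cube
    (closure_amalS_amalT ▸ Subgroup.mem_top g)
  rw [map_mul, map_pow, map_pow, amalToSL2_amalS, Smat_sq, map_wordEval, amalToSL2_amalS,
    amalToSL2_amalT] at hg
  obtain ⟨rfl, m, rfl⟩ := eq_nil_and_even_of_neg_one_pow_mul_wordEval_eq_one hl hg
  have hz : (amalS ^ 2) ^ 2 = 1 := by rw [← pow_mul]; exact amalS_pow_four
  rw [wordEval_nil, mul_one, ← two_mul, pow_mul, hz, one_pow]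

lemma amalToSL2_surjective : Function.Surjective amalToSL2 := by
  rw [← MonoidHom.range_eq_top, eq_top_iff, ← closure_Smat_Tmat, Subgroup.closure_le]
  rintro _ (rfl | rfl)
  exacts [⟨amalS, amalToSL2_amalS⟩, ⟨amalT, amalToSL2_amalT⟩]

/-- `SL₂(ℤ) ≅ ℤ/4ℤ *_{ℤ/2ℤ} ℤ/6ℤ`, with the generator of `ℤ/4ℤ` mapping to
`S` and the generator of `ℤ/6ℤ` mapping to `T`. -/
theorem statement_17 :
    orderOf Smat = 4 ∧ orderOf Tmat = 6 ∧ Smat ^ 2 = Tmat ^ 3 ∧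
    ∃ Φ : Amal z2to4 z2to6 →* Matrix.SpecialLinearGroup (Fin 2) ℤ,
      Φ (QuotientGroup.mk (Monoid.Coprod.inl (Multiplicative.ofAdd (1 : ZMod 4)))) = Smat ∧
      Φ (QuotientGroup.mk (Monoid.Coprod.inr (Multiplicative.ofAdd (1 : ZMod 6)))) = Tmat ∧
      Function.Bijective Φ :=
  ⟨orderOf_Smat, orderOf_Tmat, Smat_sq_eq_Tmat_cube, amalToSL2, amalToSL2_amalS, amalToSL2_amalT,
    amalToSL2_injective, amalToSL2_surjective⟩

end
end

section
/- The group presented by three generators b₁, b₂, b₃ subject to the three relations b₂b₃b₂⁻¹ = b₃², b₃b₁b₃⁻¹ = b₁², b₁b₂b₁⁻¹ = b₂² is the trivial group. Consequently, the amalgamated product of the three nontrivial groups A₁ = ⟨b₂,b₃ | b₂b₃b₂⁻¹ = b₃²⟩, A₂ = ⟨b₃,b₁ | b₃b₁b₃⁻¹ = b₁²⟩, A₃ = ⟨b₁,b₂ | b₁b₂b₁⁻¹ = b₂²⟩ along the infinite cyclic subgroups B_{ij} = ⟨b_k⟩ ({i,j,k} = {1,2,3}) is trivial. -/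
open MvPolynomial

noncomputable section


/-- The relations `b₂b₃b₂⁻¹ = b₃²`, `b₃b₁b₃⁻¹ = b₁²`, `b₁b₂b₁⁻¹ = b₂²`
(with `b₁ = of 0`, `b₂ = of 1`, `b₃ = of 2`). -/
def TripleRels : Set (FreeGroup (Fin 3)) :=
  {FreeGroup.of 1 * FreeGroup.of 2 * (FreeGroup.of 1)⁻¹ * (FreeGroup.of 2 * FreeGroup.of 2)⁻¹,
   FreeGroup.of 2 * FreeGroup.of 0 * (FreeGroup.of 2)⁻¹ * (FreeGroup.of 0 * FreeGroup.of 0)⁻¹,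
   FreeGroup.of 0 * FreeGroup.of 1 * (FreeGroup.of 0)⁻¹ * (FreeGroup.of 1 * FreeGroup.of 1)⁻¹}

/-- The defining relation of `Aᵢ`: `b_{i+1} b_{i+2} b_{i+1}⁻¹ = b_{i+2}²` (indices mod 3),
on the generators `{b_j : j ≠ i}`. -/
def PairRel (i : Fin 3) : Set (FreeGroup {j : Fin 3 // j ≠ i}) :=
  {FreeGroup.of ⟨i + 1, (by decide : ∀ j : Fin 3, j + 1 ≠ j) i⟩ *
     FreeGroup.of ⟨i + 2, (by decide : ∀ j : Fin 3, j + 2 ≠ j) i⟩ *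
     (FreeGroup.of ⟨i + 1, (by decide : ∀ j : Fin 3, j + 1 ≠ j) i⟩)⁻¹ *
     (FreeGroup.of ⟨i + 2, (by decide : ∀ j : Fin 3, j + 2 ≠ j) i⟩ *
        FreeGroup.of ⟨i + 2, (by decide : ∀ j : Fin 3, j + 2 ≠ j) i⟩)⁻¹}

/-- The groups `A₁, A₂, A₃` (0-indexed: `Agrp i` omits the generator `b_i`). -/
abbrev Agrp (i : Fin 3) := PresentedGroup (PairRel i)

/-- The relations of the amalgamated product: for each pair `i ≠ j` with third index `k`,
identify the two images of each element `b_k^m` of the infinite cyclic group `B_{ij} = ⟨b_k⟩`. -/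
abbrev TripleAmalRel : Subgroup (Monoid.CoprodI fun i => Agrp i) :=
  Subgroup.normalClosure
    {w | ∃ (i j k : Fin 3) (_ : i ≠ j) (hki : k ≠ i) (hkj : k ≠ j) (m : ℤ),
      w = Monoid.CoprodI.of (M := fun t => Agrp t) (i := i) ((PresentedGroup.of ⟨k, hki⟩) ^ m) *
        (Monoid.CoprodI.of (M := fun t => Agrp t) (i := j) ((PresentedGroup.of ⟨k, hkj⟩) ^ m))⁻¹}

/-!
Conjugation by `b₁` doubles `b₂`, so `b₁, b₂` satisfy the relation of the Baumslag–Solitar group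
`BS(1, 2) ≅ ℤ[1/2] ⋊ ℤ`, and products of them can be brought to the form `b₂ ^ k * b₁ ^ n`.
Conjugation by `b₃` squares `b₁` and sends `d = b₂ b₁ = b₂⁻¹ b₁ b₂` to `d⁴`; feeding this into the
relation between `b₂` and `b₃` yields `b₁ d¹² b₁⁻¹ = d³ b₁`, whose normal form is
`b₁⁸ = b₂ ^ (-8183)`. A power of `b₂` that is also a power of `b₁` is fixed and doubled by
conjugation with `b₁`, hence trivial, so `b₁⁸ = 1`; as conjugation by `b₃` squares `b₁`, this forces
`b₁ = 1`, and then the relations kill `b₂` and `b₃`. In the amalgamated product the images of the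
generators satisfy the same three relations.
-/

section BaumslagSolitar

variable {G : Type*} [Group G] {a b : G}

theorem conj_zpow_eq_zpow_two_mul (h : a * b * a⁻¹ = b * b) (k : ℤ) :
    a * b ^ k * a⁻¹ = b ^ (2 * k) := by
  rw [← conj_zpow, h, ← sq, ← zpow_natCast, ← zpow_mul]
  norm_num

theorem pow_mul_zpow_mul_inv_pow (h : a * b * a⁻¹ = b * b) (n : ℕ) (k : ℤ) :
    a ^ n * b ^ k * (a ^ n)⁻¹ = b ^ (2 ^ n * k) := by
  induction n generalizing k with
  | zero => simp
  | succ n ih =>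
    calc a ^ (n + 1) * b ^ k * (a ^ (n + 1))⁻¹
        = a ^ n * (a * b ^ k * a⁻¹) * (a ^ n)⁻¹ := by group
      _ = b ^ (2 ^ (n + 1) * k) := by
        rw [conj_zpow_eq_zpow_two_mul h, ih]; ring_nf

theorem mul_pow_eq_zpow_mul_pow (h : a * b * a⁻¹ = b * b) (n : ℕ) :
    (b * a) ^ n = b ^ ((2 : ℤ) ^ n - 1) * a ^ n := by
  induction n with
  | zero => simp
  | succ n ih =>
    calc (b * a) ^ (n + 1) = b ^ ((2 : ℤ) ^ n - 1) * (a ^ n * b * (a ^ n)⁻¹) * a ^ (n + 1) := by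
          rw [pow_succ, ih]; group
      _ = b ^ ((2 : ℤ) ^ (n + 1) - 1) * a ^ (n + 1) := by
          have hconj := pow_mul_zpow_mul_inv_pow h n 1
          rw [zpow_one] at hconj
          rw [hconj, ← zpow_add]; ring_nf

theorem zpow_eq_one_of_pow_eq_zpow (h : a * b * a⁻¹ = b * b) {m : ℕ} {k : ℤ}
    (hmk : a ^ m = b ^ k) : b ^ k = 1 := by
  have hfix : a * b ^ k * a⁻¹ = b ^ k := by rw [← hmk]; group
  rwa [conj_zpow_eq_zpow_two_mul h, two_mul, zpow_add, mul_eq_right] at hfix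

theorem eq_one_of_pow_two_pow_eq_one (h : a * b * a⁻¹ = b * b) (n : ℕ)
    (hb : b ^ 2 ^ n = 1) : b = 1 := by
  induction n with
  | zero => simpa using hb
  | succ n ih =>
    refine ih ?_
    have : a * b ^ 2 ^ n * a⁻¹ = 1 := by
      rw [← zpow_natCast, conj_zpow_eq_zpow_two_mul h, ← hb, pow_succ']
      norm_cast
    simpa using this

theorem conj_conj_eq_mul_inv_mul (h : a * b * a⁻¹ = b * b) :
    b * (b * a * b⁻¹) * b⁻¹ = (b * a * b⁻¹) * a⁻¹ * (b * a * b⁻¹) :=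
  calc b * (b * a * b⁻¹) * b⁻¹ = (b * b) * a * b⁻¹ * b⁻¹ := by group
    _ = a * b⁻¹ := by rw [← h]; group
    _ = b * (b * b)⁻¹ * b * a * b⁻¹ := by group
    _ = (b * a * b⁻¹) * a⁻¹ * (b * a * b⁻¹) := by rw [← h]; group

theorem pow_eight_eq_zpow_of_conj_mul_pow_twelve
    (h : a * b * a⁻¹ = b * b) (hrel : a * (b * a) ^ 12 * a⁻¹ = (b * a) ^ 3 * a) :
    a ^ 8 = b ^ (-8183 : ℤ) := by
  have hl : a * (b * a) ^ 12 * a⁻¹ = b ^ (8190 : ℤ) * a ^ 12 := by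
    rw [mul_pow_eq_zpow_mul_pow h]
    calc a * (b ^ ((2 : ℤ) ^ 12 - 1) * a ^ 12) * a⁻¹
        = (a * b ^ (4095 : ℤ) * a⁻¹) * a ^ 12 := by norm_num; group
      _ = b ^ (8190 : ℤ) * a ^ 12 := by rw [conj_zpow_eq_zpow_two_mul h]; norm_num
  have hr : (b * a) ^ 3 * a = b ^ (7 : ℤ) * a ^ 4 := by
    rw [mul_pow_eq_zpow_mul_pow h]; norm_num; group
  calc a ^ 8 = b ^ (-8190 : ℤ) * (b ^ (8190 : ℤ) * a ^ 12) * (a ^ 4)⁻¹ := by group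
    _ = b ^ (-8183 : ℤ) := by rw [← hl, hrel, hr]; group

end BaumslagSolitar

section CyclicTriple

variable {G : Type*} [Group G] {a b c : G}

theorem conj_mul_eq_pow_four
    (h₁ : a * b * a⁻¹ = b * b) (h₂ : b * c * b⁻¹ = c * c) (h₃ : c * a * c⁻¹ = a * a) :
    c * (b * a) * c⁻¹ = (b * a) ^ 4 := by
  have hba : b * a = b⁻¹ * a * b :=
    calc b * a = b⁻¹ * (a * b * a⁻¹) * a := by rw [h₁]; group
      _ = b⁻¹ * a * b := by group
  have hcb : c * b⁻¹ = b⁻¹ * c ^ 2 := by rw [sq, ← h₂]; group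
  have hc2a := pow_mul_zpow_mul_inv_pow h₃ 2 1
  rw [zpow_one] at hc2a
  calc c * (b * a) * c⁻¹ = (c * b⁻¹) * a * (c * b⁻¹)⁻¹ := by rw [hba]; group
    _ = b⁻¹ * (c ^ 2 * a * (c ^ 2)⁻¹) * b := by rw [hcb]; group
    _ = b⁻¹ * a ^ (4 : ℤ) * b := by rw [hc2a]; norm_num
    _ = (b⁻¹ * a * b⁻¹⁻¹) ^ 4 := by rw [conj_pow, inv_inv]; norm_cast
    _ = (b * a) ^ 4 := by rw [inv_inv, hba]

theorem conj_mul_pow_twelve_eq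
    (h₁ : a * b * a⁻¹ = b * b) (h₂ : b * c * b⁻¹ = c * c) (h₃ : c * a * c⁻¹ = a * a) :
    a * (b * a) ^ 12 * a⁻¹ = (b * a) ^ 3 * a := by
  obtain ⟨d, hd⟩ : ∃ d, d = b * a := ⟨_, rfl⟩
  rw [← hd]
  have hcd : c * d * c⁻¹ = d ^ 4 := hd ▸ conj_mul_eq_pow_four h₁ h₂ h₃
  have hca : ∀ n : ℤ, c * a ^ n * c⁻¹ = a ^ (2 * n) := conj_zpow_eq_zpow_two_mul h₃
  have hcb : c * b * c⁻¹ = d ^ 4 * a ^ (-2 : ℤ) :=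
    calc c * b * c⁻¹ = (c * d * c⁻¹) * (c * a ^ (-1 : ℤ) * c⁻¹) := by rw [hd]; group
      _ = d ^ 4 * a ^ (-2 : ℤ) := by rw [hcd, hca]; norm_num
  have hcu : d ^ 16 * a ^ (-4 : ℤ) = d ^ 4 * a ^ (-2 : ℤ) * b⁻¹ * (d ^ 4 * a ^ (-2 : ℤ)) :=
    calc d ^ 16 * a ^ (-4 : ℤ) = (c * d * c⁻¹) ^ 4 * (c * a ^ (-2 : ℤ) * c⁻¹) := by
          rw [hcd, hca, ← pow_mul]; norm_num
      _ = c * (c * b * c⁻¹) * c⁻¹ := by rw [hcb, conj_pow]; group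
      _ = d ^ 4 * a ^ (-2 : ℤ) * b⁻¹ * (d ^ 4 * a ^ (-2 : ℤ)) := by
          rw [conj_conj_eq_mul_inv_mul h₂, hcb]
  have hb : b⁻¹ = a * d⁻¹ := by rw [hd]; group
  calc a * d ^ 12 * a⁻¹ = a * d ^ (-4 : ℤ) * (d ^ 16 * a ^ (-4 : ℤ)) * a ^ (3 : ℤ) := by group
    _ = d ^ 3 * a := by rw [hcu, hb]; group

theorem eq_one_of_cyclic_conj_eq_sq
    (h₁ : a * b * a⁻¹ = b * b) (h₂ : b * c * b⁻¹ = c * c) (h₃ : c * a * c⁻¹ = a * a) :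
    a = 1 ∧ b = 1 ∧ c = 1 := by
  have ha8 := pow_eight_eq_zpow_of_conj_mul_pow_twelve h₁ (conj_mul_pow_twelve_eq h₁ h₂ h₃)
  have ha : a = 1 := by
    refine eq_one_of_pow_two_pow_eq_one h₃ 3 ?_
    rw [show 2 ^ 3 = 8 from rfl, ha8]
    exact zpow_eq_one_of_pow_eq_zpow h₁ ha8
  have hb : b = 1 := by simpa [ha] using h₁
  have hc : c = 1 := by simpa [hb] using h₂
  exact ⟨ha, hb, hc⟩

end CyclicTriple

namespace PresentedGroup

variable {α : Type*} {rels : Set (FreeGroup α)}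

theorem conj_eq_sq_of_mem {x y : α}
    (h : FreeGroup.of x * FreeGroup.of y * (FreeGroup.of x)⁻¹ *
      (FreeGroup.of y * FreeGroup.of y)⁻¹ ∈ rels) :
    (of x : PresentedGroup rels) * of y * (of x)⁻¹ = of y * of y :=
  by
  have h := one_of_mem h
  simp only [map_mul, map_inv] at h
  exact mul_inv_eq_one.mp h

theorem eq_one_of_forall_of_eq_one (h : ∀ x : α, (of x : PresentedGroup rels) = 1)
    (g : PresentedGroup rels) : g = 1 :=
  DFunLike.congr_fun (ext (φ := MonoidHom.id _) (ψ := 1) h) g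

theorem of_ne_one_of_conj_eq_sq {x y : α} (hyx : y ≠ x) :
    (of x : PresentedGroup ({FreeGroup.of x * FreeGroup.of y * (FreeGroup.of x)⁻¹ *
      (FreeGroup.of y * FreeGroup.of y)⁻¹} : Set (FreeGroup α))) ≠ 1 := by
  classical
  let f : α → Multiplicative ℤ := fun z => if z = x then .ofAdd 1 else 1
  have hrel : ∀ r ∈ ({FreeGroup.of x * FreeGroup.of y * (FreeGroup.of x)⁻¹ *
      (FreeGroup.of y * FreeGroup.of y)⁻¹} : Set (FreeGroup α)), FreeGroup.lift f r = 1 := by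
    rintro r rfl
    simp [f, hyx]
  intro h
  have := congrArg (toGroup hrel) h
  simp [f] at this

end PresentedGroup

theorem presentedGroup_tripleRels_eq_one (x : PresentedGroup TripleRels) : x = 1 := by
  obtain ⟨h₀, h₁, h₂⟩ := eq_one_of_cyclic_conj_eq_sq
    (PresentedGroup.conj_eq_sq_of_mem (rels := TripleRels) (x := 0) (y := 1) (.inr (.inr rfl)))
    (PresentedGroup.conj_eq_sq_of_mem (rels := TripleRels) (x := 1) (y := 2) (.inl rfl))
    (PresentedGroup.conj_eq_sq_of_mem (rels := TripleRels) (x := 2) (y := 0) (.inr (.inl rfl)))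
  refine PresentedGroup.eq_one_of_forall_of_eq_one (fun k => ?_) x
  fin_cases k <;> assumption

theorem exists_agrp_ne_one (i : Fin 3) : ∃ a : Agrp i, a ≠ 1 :=
  ⟨_, PresentedGroup.of_ne_one_of_conj_eq_sq (by revert i; decide)⟩

def amalGen (k : Fin 3) : (Monoid.CoprodI fun i => Agrp i) ⧸ TripleAmalRel :=
  QuotientGroup.mk (Monoid.CoprodI.of (i := k + 1)
    (PresentedGroup.of ⟨k, (by decide : ∀ j : Fin 3, j ≠ j + 1) k⟩))

theorem mk_of_of_eq_amalGen (i k : Fin 3) (hki : k ≠ i) :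
    (QuotientGroup.mk (Monoid.CoprodI.of (PresentedGroup.of (rels := PairRel i) ⟨k, hki⟩)) :
      (Monoid.CoprodI fun i => Agrp i) ⧸ TripleAmalRel) = amalGen k := by
  by_cases hi : i = k + 1
  · subst hi; rfl
  refine (QuotientGroup.eq_iff_div_mem.mpr (Subgroup.subset_normalClosure ?_)).symm
  exact ⟨k + 1, i, k, Ne.symm hi, (by decide : ∀ j : Fin 3, j ≠ j + 1) k, hki, 1, by
    simp [div_eq_mul_inv]⟩

theorem amalGen_conj_eq_sq (i : Fin 3) :
    amalGen (i + 1) * amalGen (i + 2) * (amalGen (i + 1))⁻¹ =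
      amalGen (i + 2) * amalGen (i + 2) := by
  have h := congrArg ((QuotientGroup.mk' TripleAmalRel).comp Monoid.CoprodI.of)
    (PresentedGroup.conj_eq_sq_of_mem (rels := PairRel i) rfl)
  simpa only [map_mul, map_inv, MonoidHom.comp_apply, QuotientGroup.mk'_apply,
    mk_of_of_eq_amalGen] using h

theorem tripleAmal_eq_one (x : (Monoid.CoprodI fun i => Agrp i) ⧸ TripleAmalRel) : x = 1 := by
  obtain ⟨h₀, h₁, h₂⟩ := eq_one_of_cyclic_conj_eq_sq (amalGen_conj_eq_sq 2) (amalGen_conj_eq_sq 0)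
    (amalGen_conj_eq_sq 1)
  have hgen (k : Fin 3) : amalGen k = 1 := by fin_cases k <;> assumption
  have hπ : QuotientGroup.mk' TripleAmalRel = 1 :=
    Monoid.CoprodI.ext_hom _ _ fun i => PresentedGroup.ext fun ⟨k, hki⟩ => by
      simpa only [MonoidHom.comp_apply, QuotientGroup.mk'_apply, mk_of_of_eq_amalGen,
        MonoidHom.one_apply] using hgen k
  obtain ⟨y, rfl⟩ := QuotientGroup.mk'_surjective _ x
  exact DFunLike.congr_fun hπ y

/-- the group `⟨b₁,b₂,b₃ ∣ b₂b₃b₂⁻¹=b₃², b₃b₁b₃⁻¹=b₁², b₁b₂b₁⁻¹=b₂²⟩` is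
trivial; consequently the amalgamated product of the three nontrivial groups `A₁, A₂, A₃`
along the infinite cyclic subgroups `B_{ij} = ⟨b_k⟩` is trivial. -/
theorem statement_18 :
    (∀ x : PresentedGroup TripleRels, x = 1) ∧
    (∀ i : Fin 3, ∃ a : Agrp i, a ≠ 1) ∧
    (∀ x : (Monoid.CoprodI fun i => Agrp i) ⧸ TripleAmalRel, x = 1) :=
  ⟨presentedGroup_tripleRels_eq_one, exists_agrp_ne_one, tripleAmal_eq_one⟩

end
end
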